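/- Let k ≥ 1. If G is θ_{k+1}-immersion free, then the ∞-edge-admissibility of G is at most 2k−1, i.e., δ_e^∞(G) ≤ 2k−1. Equivalently, if every pair of distinct vertices of G is separated by an edge cut of size at most k, then G has no (2k,∞)-edge-hideout. -/

import Mathlib

/-- A walk in a multigraph given by its endpoint function `ends`:
`IsWalk ends u w l` means `l` is the list of edges of a walk from `u` to `w`. -/
inductive IsWalk {V E : Type*} (ends : E → Sym2 V) : V → V → List E → Prop
  | nil (v : V) : IsWalk ends v v []
  | cons {u v w : V} {e : E} {l : List E} :
      ends e = s(u, v) → IsWalk ends v w l → IsWalk ends u w (e :: l)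

/-- `EdgeSep ends s x S A` : the edge set `A` meets every walk of length at most `s`
from `x` to a vertex of `S`. -/
def EdgeSep {V E : Type*} (ends : E → Sym2 V) (s : ℕ∞) (x : V) (S : Set V) (A : Set E) : Prop :=
  ∀ y ∈ S, ∀ l : List E, IsWalk ends x y l → (l.length : ℕ∞) ≤ s → ∃ e ∈ l, e ∈ A

/-- A `(k,s)`-edge-hide-out: every edge set separating a vertex `x ∈ R` from `R \ {x}`
(at distance `s`) has at least `k` edges. -/
def IsHideout {V E : Type*} (ends : E → Sym2 V) (s : ℕ∞) (k : ℕ) (R : Set V) : Prop :=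
  ∀ x ∈ R, ∀ A : Set E, EdgeSep ends s x (R \ {x}) A → k ≤ A.ncard

/-- `G` admits a layout of `s`-edge-degeneracy at most `k`. -/
def LayoutWidthLE {V E : Type*} (ends : E → Sym2 V) (s : ℕ∞) (k : ℕ) : Prop :=
  ∃ (n : ℕ) (L : Fin n ≃ V), ∀ i : Fin n,
    ∃ A : Set E, A.ncard ≤ k ∧ EdgeSep ends s (L i) {v | ∃ j, j < i ∧ L j = v} A

/-- The `s`-edge-degeneracy `δ_e^s(G)`. -/
noncomputable def edgeDeg {V E : Type*} (ends : E → Sym2 V) (s : ℕ∞) : ℕ :=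
  sInf {k | LayoutWidthLE ends s k}

/-- The edge-degree of a vertex (parallel edges counted with multiplicity). -/
noncomputable def degE {V E : Type*} (ends : E → Sym2 V) (v : V) : ℕ :=
  {e : E | v ∈ ends e}.ncard
/-- The multigraph `θ_k`: two vertices joined by `k` parallel edges. -/
def thetaEnds (k : ℕ) : Fin k → Sym2 (Fin 2) := fun _ => s(0, 1)

/-- `H` is an immersion of `G`: an injection of the vertices of `H` into those of `G`
together with pairwise edge-disjoint trails of `G` realizing the edges of `H`. -/
def Immersion {V' E' V E : Type*} (ends' : E' → Sym2 V') (ends : E → Sym2 V) : Prop :=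
  ∃ (φ : V' ↪ V) (P : E' → List E),
    (∀ e : E', ∃ u v : V', ends' e = s(u, v) ∧ IsWalk ends (φ u) (φ v) (P e) ∧ (P e).Nodup) ∧
    ∀ e f : E', e ≠ f → ∀ x ∈ P e, x ∉ P f

/-!
By the edge version of Menger's theorem (via unit-capacity flows and augmenting trails), a
`θ_{k+1}`-immersion-free graph has an edge cut of size at most `k` between any two vertices.

Given such cuts, every set `S` of at least two vertices contains a vertex `x` that a minimum cut
between some pair of vertices isolates from `S \ {x}`: take a minimum cut meeting `S` in as few
vertices as possible; if it contained two vertices of `S`, uncrossing it with a minimum cut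
between them (submodularity of the edge boundary) would produce a minimum cut meeting `S` in fewer
vertices. So `x` is separated from the rest of `S` by at most `k < 2k` edges, which rules out
`(2k,∞)`-edge-hideouts, and removing such vertices one at a time yields a layout of width `k`.
-/

section

open Classical

variable {V E : Type*}

theorem IsWalk.append {ends : E → Sym2 V} {a b c : V} {l₁ l₂ : List E}
    (h₁ : IsWalk ends a b l₁) (h₂ : IsWalk ends b c l₂) : IsWalk ends a c (l₁ ++ l₂) := by
  induction h₁ with
  | nil => exact h₂
  | cons he _ ih => exact .cons he (ih h₂)

theorem EdgeSep.mono {ends : E → Sym2 V} {s : ℕ∞} {x : V} {S T : Set V} {A : Set E}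
    (h : EdgeSep ends s x S A) (hTS : T ⊆ S) : EdgeSep ends s x T A :=
  fun y hy => h y (hTS hy)

theorem Set.ncard_eq_sum_ite [Fintype E] (A : Set E) :
    A.ncard = ∑ e, if e ∈ A then 1 else 0 := by
  rw [← Finset.card_filter, ← Set.ncard_coe_finset, Finset.coe_filter_univ, Set.ofPred_mem_eq]

def edgeBoundary (ends : E → Sym2 V) (X : Set V) : Set E :=
  {e | ∃ u v, ends e = s(u, v) ∧ u ∈ X ∧ v ∉ X}

section EdgeBoundary

variable {ends : E → Sym2 V}

theorem mem_edgeBoundary_iff {X : Set V} {e : E} {a b : V} (h : ends e = s(a, b)) :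
    e ∈ edgeBoundary ends X ↔ a ∈ X ∧ b ∉ X ∨ b ∈ X ∧ a ∉ X := by
  constructor
  · rintro ⟨u, v, huv, hu, hv⟩
    rcases Sym2.eq_iff.1 (huv.symm.trans h) with ⟨rfl, rfl⟩ | ⟨rfl, rfl⟩ <;> tauto
  · rintro (⟨ha, hb⟩ | ⟨hb, ha⟩)
    · exact ⟨a, b, h, ha, hb⟩
    · exact ⟨b, a, h.trans Sym2.eq_swap, hb, ha⟩

theorem edgeBoundary_compl (X : Set V) : edgeBoundary ends Xᶜ = edgeBoundary ends X := by
  ext e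
  induction h : ends e using Sym2.ind with
  | h a b => simp only [mem_edgeBoundary_iff h, Set.mem_compl_iff, not_not]; tauto

theorem ncard_edgeBoundary_inter_add_ncard_edgeBoundary_union_le [Finite E] (C D : Set V) :
    (edgeBoundary ends (C ∩ D)).ncard + (edgeBoundary ends (C ∪ D)).ncard ≤
      (edgeBoundary ends C).ncard + (edgeBoundary ends D).ncard := by
  have := Fintype.ofFinite E
  simp only [Set.ncard_eq_sum_ite, ← Finset.sum_add_distrib]
  refine Finset.sum_le_sum fun e _ => ?_
  induction h : ends e using Sym2.ind with
  | h a b =>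
    simp only [mem_edgeBoundary_iff h, Set.mem_inter_iff, Set.mem_union]
    by_cases a ∈ C <;> by_cases b ∈ C <;> by_cases a ∈ D <;> by_cases b ∈ D <;> simp [*]

theorem IsWalk.exists_mem_edgeBoundary {X : Set V} {a b : V} {l : List E}
    (h : IsWalk ends a b l) (ha : a ∈ X) (hb : b ∉ X) : ∃ e ∈ l, e ∈ edgeBoundary ends X := by
  induction h with
  | nil => exact absurd ha hb
  | @cons u v _ e _ he _ ih =>
    by_cases hv : v ∈ X
    · obtain ⟨f, hf, hfX⟩ := ih hv hb
      exact ⟨f, List.mem_cons_of_mem _ hf, hfX⟩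
    · exact ⟨e, List.mem_cons_self, u, v, he, ha, hv⟩

theorem edgeSep_edgeBoundary {s : ℕ∞} {x : V} {S X : Set V} (hx : x ∈ X)
    (hS : ∀ y ∈ S, y ∉ X) : EdgeSep ends s x S (edgeBoundary ends X) :=
  fun y hy _ hl _ => hl.exists_mem_edgeBoundary hx (hS y hy)

/-- The vertices reachable from `x` without using `A` form a cut whose boundary lies in `A`. -/
theorem exists_ncard_edgeBoundary_le_of_edgeSep [Finite E] {x y : V} {A : Set E}
    (h : EdgeSep ends ⊤ x {y} A) :
    ∃ X, x ∈ X ∧ y ∉ X ∧ (edgeBoundary ends X).ncard ≤ A.ncard := by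
  set X := {v | ∃ l, IsWalk ends x v l ∧ ∀ e ∈ l, e ∉ A}
  have hbd : edgeBoundary ends X ⊆ A := by
    rintro e ⟨u, v, huv, ⟨l, hl, hlA⟩, hv⟩
    by_contra heA
    refine hv ⟨l ++ [e], hl.append (.cons huv (.nil v)), fun f hf => ?_⟩
    rcases List.mem_append.1 hf with hf | hf
    · exact hlA f hf
    · exact (List.mem_singleton.1 hf) ▸ heA
  refine ⟨X, ⟨[], .nil x, by simp⟩, fun ⟨l, hl, hlA⟩ => ?_, Set.ncard_le_ncard hbd⟩
  obtain ⟨e, he, heA⟩ := h y rfl l hl le_top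
  exact hlA e he heA

end EdgeBoundary

def IsMinCut (ends : E → Sym2 V) (u v : V) (C : Set V) : Prop :=
  u ∈ C ∧ v ∉ C ∧
    ∀ Z : Set V, u ∈ Z → v ∉ Z → (edgeBoundary ends C).ncard ≤ (edgeBoundary ends Z).ncard

theorem exists_isMinCut [Finite V] (ends : E → Sym2 V) {u v : V} (huv : u ≠ v) :
    ∃ C, IsMinCut ends u v C := by
  obtain ⟨C, ⟨hu, hv⟩, hmin⟩ := Set.exists_min_image {Z : Set V | u ∈ Z ∧ v ∉ Z}
    (fun Z => (edgeBoundary ends Z).ncard) (Set.toFinite _) ⟨{u}, rfl, huv.symm⟩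
  exact ⟨C, hu, hv, fun Z hu hv => hmin Z ⟨hu, hv⟩⟩

namespace IsMinCut

variable {ends : E → Sym2 V} {u v x w : V} {C D : Set V}

theorem compl (h : IsMinCut ends u v C) : IsMinCut ends v u Cᶜ := by
  refine ⟨h.2.1, not_not.2 h.1, fun Z hv hu => ?_⟩
  rw [edgeBoundary_compl, ← edgeBoundary_compl Z]
  exact h.2.2 Zᶜ hu (not_not.2 hv)

/-- Uncrossing: `C ∪ D` still separates `u` from `v`, so by submodularity of the boundary
`C ∩ D` is as good a cut as `D`. -/
theorem inter [Finite E] (hC : IsMinCut ends u v C) (hD : IsMinCut ends x w D) (hx : x ∈ C)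
    (hv : v ∉ D) : IsMinCut ends x w (C ∩ D) := by
  refine ⟨⟨hx, hD.1⟩, fun h => hD.2.1 h.2, fun Z hxZ hwZ => ?_⟩
  have hunion := hC.2.2 (C ∪ D) (Or.inl hC.1) (by simp [hC.2.1, hv])
  have hsub := ncard_edgeBoundary_inter_add_ncard_edgeBoundary_union_le (ends := ends) C D
  have hDZ := hD.2.2 Z hxZ hwZ
  omega

theorem ncard_edgeBoundary_le_of_edgeSep [Finite E] (h : IsMinCut ends u v C) {A : Set E}
    (hA : EdgeSep ends ⊤ u {v} A) : (edgeBoundary ends C).ncard ≤ A.ncard := by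
  obtain ⟨X, hu, hv, hX⟩ := exists_ncard_edgeBoundary_le_of_edgeSep hA
  exact (h.2.2 X hu hv).trans hX

/-- Intersect `C` with a minimum cut between `x` and `w`, or with its complement. -/
theorem exists_inter_ssubset [Finite V] [Finite E] {S : Set V} (hC : IsMinCut ends u v C)
    (hx : x ∈ C ∩ S) (hw : w ∈ C ∩ S) (hxw : x ≠ w) :
    ∃ a b C', IsMinCut ends a b C' ∧ (C' ∩ S).Nonempty ∧ C' ∩ S ⊂ C ∩ S := by
  have key : ∀ a b C', IsMinCut ends a b C' → C' ⊆ C → a ∈ S → b ∈ C ∩ S →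
      ∃ a b C', IsMinCut ends a b C' ∧ (C' ∩ S).Nonempty ∧ C' ∩ S ⊂ C ∩ S :=
    fun a b C' h hC' ha hb => ⟨a, b, C', h, ⟨a, h.1, ha⟩,
      (Set.ssubset_iff_of_subset (Set.inter_subset_inter_left S hC')).2
        ⟨b, hb, fun h' => h.2.1 h'.1⟩⟩
  obtain ⟨D, hD⟩ := exists_isMinCut ends hxw
  by_cases hvD : v ∈ D
  · exact key w x _ (hC.inter hD.compl hw.1 (not_not.2 hvD)) Set.inter_subset_left hw.2 hx
  · exact key x w _ (hC.inter hD hx.1 hvD) Set.inter_subset_left hx.2 hw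

end IsMinCut

theorem exists_isMinCut_inter_eq_singleton [Finite V] [Finite E] (ends : E → Sym2 V)
    {S : Set V} (hS : S.Nontrivial) :
    ∃ x ∈ S, ∃ u v C, IsMinCut ends u v C ∧ C ∩ S = {x} := by
  obtain ⟨a, ha, b, hb, hab⟩ := hS
  obtain ⟨C₀, hC₀⟩ := exists_isMinCut ends hab
  obtain ⟨C, ⟨⟨u, v, hC⟩, x, hx⟩, hmin⟩ := Set.exists_min_image
    {C | (∃ u v, IsMinCut ends u v C) ∧ (C ∩ S).Nonempty} (fun C => (C ∩ S).ncard)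
    (Set.toFinite _) ⟨C₀, ⟨a, b, hC₀⟩, a, hC₀.1, ha⟩
  refine ⟨x, hx.2, u, v, C, hC, Set.eq_singleton_iff_unique_mem.2 ⟨hx, fun w hw => ?_⟩⟩
  by_contra hwx
  obtain ⟨a', b', C', hC', hne, hlt⟩ := hC.exists_inter_ssubset hx hw (Ne.symm hwx)
  exact (hmin C' ⟨⟨a', b', hC'⟩, hne⟩).not_gt (Set.ncard_lt_ncard hlt)

theorem exists_edgeSep_ncard_le [Finite V] [Finite E] {ends : E → Sym2 V} {k : ℕ}
    (hsep : ∀ x y : V, x ≠ y → ∃ A : Set E, A.ncard ≤ k ∧ EdgeSep ends ⊤ x {y} A)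
    {S : Set V} (hS : S.Nonempty) :
    ∃ x ∈ S, ∃ A : Set E, A.ncard ≤ k ∧ EdgeSep ends ⊤ x (S \ {x}) A := by
  rcases hS.exists_eq_singleton_or_nontrivial with ⟨x, rfl⟩ | hS
  · exact ⟨x, rfl, ∅, by simp, fun y hy => absurd hy (by simp)⟩
  obtain ⟨x, hx, u, v, C, hC, hCS⟩ := exists_isMinCut_inter_eq_singleton ends hS
  obtain ⟨A, hAk, hA⟩ := hsep u v fun h => hC.2.1 (h ▸ hC.1)
  refine ⟨x, hx, edgeBoundary ends C, (hC.ncard_edgeBoundary_le_of_edgeSep hA).trans hAk,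
    edgeSep_edgeBoundary (hCS.ge rfl).1 fun y ⟨hyS, hyx⟩ hyC => hyx ?_⟩
  exact (hCS.le ⟨hyC, hyS⟩ :)

theorem exists_nodup_list_forall_take {α : Type*} (Q : α → Set α → Prop)
    (hQ : ∀ S : Finset α, S.Nonempty → ∃ x ∈ S, Q x ↑(S.erase x)) (S : Finset α) :
    ∃ l : List α, l.Nodup ∧ l.toFinset = S ∧
      ∀ (i : ℕ) (hi : i < l.length), Q l[i] {a | a ∈ l.take i} := by
  induction S using Finset.strongInduction with
  | H S ih =>
  rcases S.eq_empty_or_nonempty with rfl | hS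
  · exact ⟨[], List.nodup_nil, rfl, fun i hi => absurd hi (Nat.not_lt_zero i)⟩
  obtain ⟨x, hx, hQx⟩ := hQ S hS
  obtain ⟨l, hl, hlS, hQl⟩ := ih _ (Finset.erase_ssubset hx)
  have hxl : x ∉ l := fun h => by simpa [hlS] using List.mem_toFinset.2 h
  refine ⟨l ++ [x], hl.append (List.nodup_singleton x) (List.disjoint_singleton.2 hxl), ?_,
    fun i hi => ?_⟩
  · simp [hlS, Finset.insert_erase hx]
  · rcases (Nat.lt_succ_iff.1 (by simpa using hi)).lt_or_eq with hi | rfl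
    · rw [List.getElem_append_left hi, List.take_append_of_le_length hi.le]
      exact hQl i hi
    · rw [List.getElem_concat_length rfl, List.take_left]
      convert hQx
      ext a
      simp [← hlS]

theorem layoutWidthLE_of_forall_exists_edgeSep [Finite V] {ends : E → Sym2 V} {s : ℕ∞} {k : ℕ}
    (h : ∀ S : Set V, S.Nonempty →
      ∃ x ∈ S, ∃ A : Set E, A.ncard ≤ k ∧ EdgeSep ends s x (S \ {x}) A) :
    LayoutWidthLE ends s k := by
  have := Fintype.ofFinite V
  obtain ⟨l, hl, hlV, hsep⟩ := exists_nodup_list_forall_take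
    (fun x T => ∃ A : Set E, A.ncard ≤ k ∧ EdgeSep ends s x T A)
    (fun S hS => by simpa using h S (Finset.coe_nonempty.2 hS)) Finset.univ
  have hmem (v : V) : v ∈ l := List.mem_toFinset.1 (hlV ▸ Finset.mem_univ v)
  refine ⟨l.length, hl.getEquivOfForallMemList l hmem, fun i => ?_⟩
  obtain ⟨A, hAk, hA⟩ := hsep i i.isLt
  refine ⟨A, hAk, hA.mono ?_⟩
  rintro _ ⟨j, hji, rfl⟩
  exact List.mem_take_iff_getElem.2 ⟨j, by omega, rfl⟩

section Flow

variable (src dst : E → V)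

/-- A flow `f` sends `f e` units along `e` from `src e` to `dst e`. -/
noncomputable def outflow [Fintype E] (f : E → ℤ) (w : V) : ℤ :=
  ∑ e, f e * ((if src e = w then 1 else 0) - (if dst e = w then 1 else 0))

/-- Traversing `e` from `u` to `v` moves along (`s = 1`) or against (`s = -1`) its orientation. -/
def IsDart (e : E) (u v : V) (s : ℤ) : Prop :=
  src e = u ∧ dst e = v ∧ s = 1 ∨ src e = v ∧ dst e = u ∧ s = -1

/-- With `P e s := |f e + s| ≤ 1` these are the walks in the residual graph of `f`, with
`P e s := f e = s` the walks along `f`. -/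
inductive DartWalk (P : E → ℤ → Prop) : V → V → List E → Prop
  | nil (v : V) : DartWalk P v v []
  | cons {u v w : V} {e : E} {s : ℤ} {l : List E} :
      IsDart src dst e u v s → P e s → DartWalk P v w l → DartWalk P u w (e :: l)

variable {src dst} {P : E → ℤ → Prop} {e : E} {s : ℤ} {u v w x y : V} {l : List E}

theorem IsDart.ne_zero (h : IsDart src dst e u v s) : s ≠ 0 := by
  rcases h with ⟨-, -, rfl⟩ | ⟨-, -, rfl⟩ <;> norm_num

theorem IsDart.sym2_eq (h : IsDart src dst e u v s) : s(src e, dst e) = s(u, v) := by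
  rcases h with ⟨rfl, rfl, -⟩ | ⟨rfl, rfl, -⟩
  exacts [rfl, Sym2.eq_swap]

theorem IsDart.src_eq_or_dst_eq (h : IsDart src dst e u v s) : u = src e ∨ u = dst e := by
  rcases h with ⟨rfl, -, -⟩ | ⟨-, rfl, -⟩ <;> simp

theorem IsDart.eq_or_eq (h : IsDart src dst e u v s) (hw : w = src e ∨ w = dst e) :
    w = u ∨ w = v := by
  rcases h with ⟨rfl, rfl, -⟩ | ⟨rfl, rfl, -⟩ <;> tauto

namespace DartWalk

theorem isWalk (h : DartWalk src dst P u v l) : IsWalk (fun e => s(src e, dst e)) u v l := by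
  induction h with
  | nil v => exact .nil v
  | cons hd _ _ ih => exact .cons hd.sym2_eq ih

theorem concat (h : DartWalk src dst P u v l) (hd : IsDart src dst e v w s) (hP : P e s) :
    DartWalk src dst P u w (l ++ [e]) := by
  induction h with
  | nil v => exact .cons hd hP (.nil w)
  | cons hd' hP' _ ih => exact .cons hd' hP' (ih hd)

theorem exists_suffix (h : DartWalk src dst P v y l) (he : e ∈ l)
    (hu : u = src e ∨ u = dst e) : ∃ t, t <:+ l ∧ DartWalk src dst P u y t := by
  induction h with
  | nil => simp at he
  | @cons a b _ e' _ l hd hP hl ih =>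
    by_cases hee' : e = e'
    · subst hee'
      rcases hd.eq_or_eq hu with rfl | rfl
      exacts [⟨_, List.suffix_refl _, .cons hd hP hl⟩, ⟨l, List.suffix_cons _ _, hl⟩]
    · obtain ⟨t, ht, htw⟩ := ih (List.mem_of_ne_of_mem hee' he)
      exact ⟨t, ht.trans (List.suffix_cons _ _), htw⟩

theorem exists_nodup (h : DartWalk src dst P u y l) :
    ∃ l', l'.Nodup ∧ DartWalk src dst P u y l' := by
  induction h with
  | nil v => exact ⟨[], List.nodup_nil, .nil v⟩
  | @cons u _ _ e _ _ hd hP _ ih =>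
    obtain ⟨t, ht, htw⟩ := ih
    by_cases he : e ∈ t
    · obtain ⟨t', ht', ht'w⟩ := htw.exists_suffix he hd.src_eq_or_dst_eq
      exact ⟨t', ht'.sublist.nodup ht, ht'w⟩
    · exact ⟨e :: t, List.nodup_cons.2 ⟨he, ht⟩, .cons hd hP htw⟩

end DartWalk

section Reach

variable [Fintype V]

variable (src dst) in
noncomputable def dartReach (P : E → ℤ → Prop) (x : V) : Finset V :=
  Finset.univ.filter fun v => ∃ l, DartWalk src dst P x v l

theorem mem_dartReach : v ∈ dartReach src dst P x ↔ ∃ l, DartWalk src dst P x v l := by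
  simp [dartReach]

theorem self_mem_dartReach (P : E → ℤ → Prop) (x : V) : x ∈ dartReach src dst P x :=
  mem_dartReach.2 ⟨[], .nil x⟩

theorem mem_dartReach_of_isDart (hu : u ∈ dartReach src dst P x) (hd : IsDart src dst e u v s)
    (hP : P e s) : v ∈ dartReach src dst P x := by
  obtain ⟨l, hl⟩ := mem_dartReach.1 hu
  exact mem_dartReach.2 ⟨_, hl.concat hd hP⟩

end Reach

variable [Fintype E]

theorem outflow_add (f g : E → ℤ) (w : V) :
    outflow src dst (f + g) w = outflow src dst f w + outflow src dst g w := by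
  simp only [outflow, Pi.add_apply, add_mul, Finset.sum_add_distrib]

theorem outflow_sub (f g : E → ℤ) (w : V) :
    outflow src dst (f - g) w = outflow src dst f w - outflow src dst g w := by
  simp only [outflow, Pi.sub_apply, sub_mul, Finset.sum_sub_distrib]

theorem outflow_zero (w : V) : outflow src dst (0 : E → ℤ) w = 0 := by
  simp [outflow]

theorem IsDart.outflow_single (h : IsDart src dst e u v s) (w : V) :
    outflow src dst (Pi.single e s) w = (if u = w then 1 else 0) - (if v = w then 1 else 0) := by
  rw [outflow, Finset.sum_eq_single e (fun e' _ he' => by simp [he']) (by simp)]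
  rcases h with ⟨rfl, rfl, rfl⟩ | ⟨rfl, rfl, rfl⟩ <;> simp

theorem sum_outflow (f : E → ℤ) (T : Finset V) :
    ∑ w ∈ T, outflow src dst f w =
      ∑ e, f e * ((if src e ∈ T then 1 else 0) - (if dst e ∈ T then 1 else 0)) := by
  simp only [outflow]
  rw [Finset.sum_comm]
  refine Finset.sum_congr rfl fun e _ => ?_
  rw [← Finset.mul_sum, Finset.sum_sub_distrib, Finset.sum_ite_eq, Finset.sum_ite_eq]

theorem DartWalk.exists_flow (h : DartWalk src dst P u y l) (hl : l.Nodup) :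
    ∃ δ : E → ℤ, (∀ e ∉ l, δ e = 0) ∧ (∀ e ∈ l, P e (δ e) ∧ δ e ≠ 0) ∧
      ∀ w, outflow src dst δ w = (if u = w then 1 else 0) - (if y = w then 1 else 0) := by
  induction h with
  | nil v => exact ⟨0, fun _ _ => rfl, by simp, fun w => by simp [outflow_zero]⟩
  | @cons u v w e s l hd hP _ ih =>
    obtain ⟨het, hl⟩ := List.nodup_cons.1 hl
    obtain ⟨δ, hδ0, hδP, hδ⟩ := ih hl
    refine ⟨Pi.single e s + δ, fun e' he' => ?_, fun e' he' => ?_, fun x => ?_⟩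
    · rw [List.mem_cons, not_or] at he'
      simp [he'.1, hδ0 e' he'.2]
    · rcases List.mem_cons.1 he' with rfl | he'
      · simpa [hδ0 e' het] using ⟨hP, hd.ne_zero⟩
      · simpa [ne_of_mem_of_not_mem he' het] using hδP e' he'
    · rw [outflow_add, hd.outflow_single, hδ]
      ring

variable (src dst) in
def IsFlow (f : E → ℤ) (x y : V) : Prop :=
  (∀ e, |f e| ≤ 1) ∧ ∀ w, w ≠ x → w ≠ y → outflow src dst f w = 0

variable {f : E → ℤ}

theorem IsFlow.outflow_eq_sum (hf : IsFlow src dst f x y) {T : Finset V}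
    (hx : x ∈ T) (hy : y ∉ T) :
    outflow src dst f x =
      ∑ e, f e * ((if src e ∈ T then 1 else 0) - (if dst e ∈ T then 1 else 0)) := by
  rw [← sum_outflow, Finset.sum_eq_single_of_mem x hx
    fun w hw hwx => hf.2 w hwx (ne_of_mem_of_not_mem hw hy)]

variable [Fintype V]

/-- Augmenting path: otherwise the vertices reachable from `x` in the residual graph form a
saturated cut. -/
theorem IsFlow.exists_outflow_eq_add_one (hf : IsFlow src dst f x y)
    (hxy : x ≠ y) (hcut : ∀ T : Finset V, x ∈ T → y ∉ T →
      outflow src dst f x < (edgeBoundary (fun e => s(src e, dst e)) ↑T).ncard) :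
    ∃ g, IsFlow src dst g x y ∧ outflow src dst g x = outflow src dst f x + 1 := by
  set R := dartReach src dst (fun e s => |f e + s| ≤ 1) x
  have hxR : x ∈ R := self_mem_dartReach _ x
  by_cases hy : y ∈ R
  · obtain ⟨l₀, hl₀⟩ := mem_dartReach.1 hy
    obtain ⟨l, hnd, hl⟩ := hl₀.exists_nodup
    obtain ⟨δ, hδ0, hδP, hδ⟩ := hl.exists_flow hnd
    refine ⟨f + δ, ⟨fun e => ?_, fun w hwx hwy => ?_⟩, ?_⟩
    · by_cases he : e ∈ l
      exacts [(hδP e he).1, by simpa [hδ0 e he] using hf.1 e]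
    · rw [outflow_add, hf.2 w hwx hwy, hδ]
      simp [Ne.symm hwx, Ne.symm hwy]
    · rw [outflow_add, hδ]
      simp [hxy.symm]
  refine absurd (hcut R hxR hy) (not_lt.2 (le_of_eq ?_))
  rw [hf.outflow_eq_sum hxR hy, Set.ncard_eq_sum_ite, Nat.cast_sum]
  refine Finset.sum_congr rfl fun e _ => ?_
  have hfe := abs_le.1 (hf.1 e)
  have hfwd (hs : src e ∈ R) (hd : dst e ∉ R) : f e = 1 := by
    by_contra
    exact hd (mem_dartReach_of_isDart hs (Or.inl ⟨rfl, rfl, rfl⟩) (abs_le.2 ⟨by omega, by omega⟩))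
  have hbwd (hd : dst e ∈ R) (hs : src e ∉ R) : f e = -1 := by
    by_contra
    exact hs (mem_dartReach_of_isDart hd (Or.inr ⟨rfl, rfl, rfl⟩) (abs_le.2 ⟨by omega, by omega⟩))
  rw [mem_edgeBoundary_iff (ends := fun e => s(src e, dst e)) rfl]
  by_cases hs : src e ∈ R <;> by_cases hd : dst e ∈ R <;> simp [hs, hd, hfwd, hbwd]

/-- Flow decomposition: otherwise the vertices reachable from `x` along `f` form a cut that `f`
does not leave. -/
theorem IsFlow.exists_trail (hf : IsFlow src dst f x y) (hxy : x ≠ y)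
    (hpos : 0 < outflow src dst f x) :
    ∃ l, IsWalk (fun e => s(src e, dst e)) x y l ∧ l.Nodup ∧ (∀ e ∈ l, f e ≠ 0) ∧
      ∃ g, IsFlow src dst g x y ∧ outflow src dst g x = outflow src dst f x - 1 ∧
        (∀ e ∈ l, g e = 0) ∧ ∀ e ∉ l, g e = f e := by
  set R := dartReach src dst (fun e s => f e = s) x
  have hxR : x ∈ R := self_mem_dartReach _ x
  by_cases hy : y ∈ R
  · obtain ⟨l₀, hl₀⟩ := mem_dartReach.1 hy
    obtain ⟨l, hnd, hl⟩ := hl₀.exists_nodup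
    obtain ⟨δ, hδ0, hδP, hδ⟩ := hl.exists_flow hnd
    refine ⟨l, hl.isWalk, hnd, fun e he => (hδP e he).1 ▸ (hδP e he).2, f - δ,
      ⟨fun e => ?_, fun w hwx hwy => ?_⟩, ?_, fun e he => ?_, fun e he => ?_⟩
    · by_cases he : e ∈ l
      exacts [by simp [(hδP e he).1], by simpa [hδ0 e he] using hf.1 e]
    · rw [outflow_sub, hf.2 w hwx hwy, hδ]
      simp [Ne.symm hwx, Ne.symm hwy]
    · rw [outflow_sub, hδ]
      simp [hxy.symm]
    · simp [(hδP e he).1]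
    · simp [hδ0 e he]
  refine absurd (hf.outflow_eq_sum hxR hy) (ne_of_gt ?_)
  refine lt_of_le_of_lt (Finset.sum_nonpos fun e _ => ?_) hpos
  have hfe := abs_le.1 (hf.1 e)
  have hfwd (hs : src e ∈ R) (hd : dst e ∉ R) : f e ≠ 1 :=
    fun h => hd (mem_dartReach_of_isDart hs (Or.inl ⟨rfl, rfl, rfl⟩) h)
  have hbwd (hd : dst e ∈ R) (hs : src e ∉ R) : f e ≠ -1 :=
    fun h => hs (mem_dartReach_of_isDart hd (Or.inr ⟨rfl, rfl, rfl⟩) h)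
  by_cases hs : src e ∈ R <;> by_cases hd : dst e ∈ R <;> simp [hs, hd]
  exacts [by have := hfwd hs hd; omega, by have := hbwd hd hs; omega]

theorem exists_isFlow_outflow_eq (hxy : x ≠ y) (p : ℕ)
    (hcut : ∀ T : Finset V, x ∈ T → y ∉ T →
      p ≤ (edgeBoundary (fun e => s(src e, dst e)) ↑T).ncard) :
    ∃ f, IsFlow src dst f x y ∧ outflow src dst f x = p := by
  induction p with
  | zero => exact ⟨0, ⟨by simp, fun w _ _ => outflow_zero w⟩, outflow_zero x⟩
  | succ p ih =>
    obtain ⟨f, hf, hfp⟩ := ih fun T hx hy => (hcut T hx hy).trans' p.le_succ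
    obtain ⟨g, hg, hgp⟩ := hf.exists_outflow_eq_add_one hxy fun T hx hy => by
      have := hcut T hx hy
      omega
    exact ⟨g, hg, by rw [hgp, hfp]; push_cast; rfl⟩

theorem IsFlow.exists_disjoint_trails (hxy : x ≠ y) (p : ℕ) (hf : IsFlow src dst f x y)
    (hfp : outflow src dst f x = p) :
    ∃ L : List (List E), L.length = p ∧
      (∀ l ∈ L, IsWalk (fun e => s(src e, dst e)) x y l ∧ l.Nodup ∧ ∀ e ∈ l, f e ≠ 0) ∧
      L.Pairwise List.Disjoint := by
  induction p generalizing f with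
  | zero => exact ⟨[], rfl, by simp, List.Pairwise.nil⟩
  | succ p ih =>
    obtain ⟨l, hl, hnd, hlf, g, hg, hgp, hgl, hgf⟩ := hf.exists_trail hxy (by omega)
    obtain ⟨L, hlen, hL, hdisj⟩ := ih hg (by omega)
    have hLl (l' : List E) (hl' : l' ∈ L) (e : E) (he : e ∈ l') : e ∉ l :=
      fun hel => (hL l' hl').2.2 e he (hgl e hel)
    refine ⟨l :: L, by simp [hlen], ?_, List.pairwise_cons.2 ⟨?_, hdisj⟩⟩
    · rintro l' (_ | ⟨_, hl'⟩)
      · exact ⟨hl, hnd, hlf⟩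
      · refine ⟨(hL l' hl').1, (hL l' hl').2.1, fun e he => ?_⟩
        rw [← hgf e (hLl l' hl' e he)]
        exact (hL l' hl').2.2 e he
    · exact fun l' hl' e hel hel' => hLl l' hl' e hel' hel

end Flow

/-- Menger's theorem, edge version. -/
theorem exists_disjoint_trails [Finite V] [Finite E] {ends : E → Sym2 V} {x y : V} (hxy : x ≠ y)
    {p : ℕ} (hsep : ∀ A : Set E, EdgeSep ends ⊤ x {y} A → p ≤ A.ncard) :
    ∃ L : List (List E), L.length = p ∧ (∀ l ∈ L, IsWalk ends x y l ∧ l.Nodup) ∧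
      L.Pairwise List.Disjoint := by
  have := Fintype.ofFinite V
  have := Fintype.ofFinite E
  obtain ⟨src, dst, rfl⟩ : ∃ src dst : E → V, ends = fun e => s(src e, dst e) :=
    ⟨_, _, funext fun e => (Quot.out_eq (ends e)).symm⟩
  obtain ⟨f, hf, hfp⟩ := exists_isFlow_outflow_eq hxy p fun T hx hy =>
    hsep _ (edgeSep_edgeBoundary hx (by simpa using hy))
  obtain ⟨L, hlen, hL, hdisj⟩ := hf.exists_disjoint_trails hxy p hfp
  exact ⟨L, hlen, fun l hl => ⟨(hL l hl).1, (hL l hl).2.1⟩, hdisj⟩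

theorem immersion_thetaEnds {ends : E → Sym2 V} {x y : V} (hxy : x ≠ y) {L : List (List E)}
    (hL : ∀ l ∈ L, IsWalk ends x y l ∧ l.Nodup) (hdisj : L.Pairwise List.Disjoint) :
    Immersion (thetaEnds L.length) ends := by
  refine ⟨⟨![x, y], fun a b hab => ?_⟩, fun i => L[i], fun i => ⟨0, 1, rfl, ?_⟩, fun i j hij => ?_⟩
  · fin_cases a <;> fin_cases b <;> simp_all [hxy.symm]
  · exact hL _ (List.getElem_mem i.isLt)
  · rcases lt_or_gt_of_ne (Fin.val_ne_of_ne hij) with h | h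
    · exact fun e he he' => List.pairwise_iff_getElem.1 hdisj i j i.isLt j.isLt h he he'
    · exact fun e he he' => List.pairwise_iff_getElem.1 hdisj j i j.isLt i.isLt h he' he

theorem exists_edgeSep_of_not_immersion [Finite V] [Finite E] {ends : E → Sym2 V} {k : ℕ}
    (h : ¬ Immersion (thetaEnds (k + 1)) ends) (x y : V) (hxy : x ≠ y) :
    ∃ A : Set E, A.ncard ≤ k ∧ EdgeSep ends ⊤ x {y} A := by
  by_contra! hA
  obtain ⟨L, hlen, hL, hdisj⟩ := exists_disjoint_trails hxy (p := k + 1) fun A hsep => by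
    by_contra! hlt
    exact hA A (by omega) hsep
  exact h (hlen ▸ immersion_thetaEnds hxy hL hdisj)

end

theorem theta_free_edgeAdmissibility_general {V E : Type*} [Finite V] [Finite E]
    (ends : E → Sym2 V) (k : ℕ) (hk : 1 ≤ k) :
    (¬ Immersion (thetaEnds (k + 1)) ends → edgeDeg ends ⊤ ≤ 2 * k - 1) ∧
    ((∀ x y : V, x ≠ y → ∃ A : Set E, A.ncard ≤ k ∧ EdgeSep ends ⊤ x {y} A) →
      ∀ S : Set V, S.Nonempty → ¬ IsHideout ends ⊤ (2 * k) S) := by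
  refine ⟨fun hfree => ?_, fun hsep S hS hhide => ?_⟩
  · have hlayout : LayoutWidthLE ends ⊤ k := layoutWidthLE_of_forall_exists_edgeSep
      fun S hS => exists_edgeSep_ncard_le (exists_edgeSep_of_not_immersion hfree) hS
    exact (Nat.sInf_le hlayout).trans (by omega)
  · obtain ⟨x, hx, A, hAk, hA⟩ := exists_edgeSep_ncard_le hsep hS
    have := hhide x hx A hA
    omega

/-- if `G` is `θ_{k+1}`-immersion free (`k ≥ 1`) then `δ_e^∞(G) ≤ 2k-1`;
equivalently, if every pair of distinct vertices is separated by an edge cut of size at most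
`k`, then `G` has no (nonempty) `(2k,∞)`-edge-hideout. -/
theorem theta_free_edgeAdmissibility {V E : Type*} [Finite V] [Finite E]
    (ends : E → Sym2 V) (hloopless : ∀ e, ¬ (ends e).IsDiag) (k : ℕ) (hk : 1 ≤ k) :
    (¬ Immersion (thetaEnds (k + 1)) ends → edgeDeg ends ⊤ ≤ 2 * k - 1) ∧
    ((∀ x y : V, x ≠ y → ∃ A : Set E, A.ncard ≤ k ∧ EdgeSep ends ⊤ x {y} A) →
      ∀ S : Set V, S.Nonempty → ¬ IsHideout ends ⊤ (2 * k) S) :=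
  theta_free_edgeAdmissibility_general ends k hk
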